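/- Let R_{2N} be the ring (cycle) graph on vertices {0, 1, …, 2N−1}, N ≥ 3, with unit weights between i and i+1 (mod 2N) and all other weights zero, and let V_1 = {0, 2, 4, …, 2N−2} be the even-indexed vertices. Then the Kron reduction K(L,V_1) of the Laplacian of R_{2N} is the graph Laplacian of the ring graph on the N vertices of V_1 in which consecutive kept vertices (2i and 2i+2 mod 2N) are joined by edges of weight 1/2 (and there are no other edges). -/

import Mathlib

open Matrix

noncomputable def deg {n : Type*} [Fintype n] (W : Matrix n n ℝ) (i : n) : ℝ := ∑ j, W i j

noncomputable def lap {n : Type*} [Fintype n] [DecidableEq n] (W : Matrix n n ℝ) :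
    Matrix n n ℝ :=
  Matrix.diagonal (deg W) - W

def IsConn {n : Type*} (W : Matrix n n ℝ) : Prop :=
  ∀ i j : n, Relation.ReflTransGen (fun a b => 0 < W a b) i j

def IsBipartiteWith {n : Type*} (W : Matrix n n ℝ) (V1 : Set n) : Prop :=
  ∀ i j, 0 < W i j → (i ∈ V1 ↔ j ∉ V1)

open Classical in
noncomputable def sortedEigs {n : Type*} [Fintype n] [DecidableEq n] (A : Matrix n n ℝ) :
    Fin (Fintype.card n) → ℝ :=
  if h : A.IsHermitian then
    (fun i => h.eigenvalues ((Fintype.equivFin n).symm i)) ∘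
      ⇑(Tuple.sort fun i => h.eigenvalues ((Fintype.equivFin n).symm i))
  else 0

noncomputable def kron {n : Type*} [Fintype n] [DecidableEq n] (L : Matrix n n ℝ)
    (V1 : Finset n) : Matrix ↥V1 ↥V1 ℝ :=
  L.submatrix (Subtype.val : ↥V1 → n) (Subtype.val : ↥V1 → n) -
    L.submatrix (Subtype.val : ↥V1 → n) (Subtype.val : ↥(V1ᶜ) → n) *
      (L.submatrix (Subtype.val : ↥(V1ᶜ) → n) (Subtype.val : ↥(V1ᶜ) → n))⁻¹ *
      L.submatrix (Subtype.val : ↥(V1ᶜ) → n) (Subtype.val : ↥V1 → n)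

noncomputable def wred {m : Type*} [DecidableEq m] (K : Matrix m m ℝ) : Matrix m m ℝ :=
  Matrix.of fun i j => if i = j then 0 else -K i j

open scoped Fin.NatCast Fin.CommRing

/-!
The ring `R_{2N}` is bipartite between even and odd vertices and every odd vertex has degree 2,
so the odd–odd block of the Laplacian is `2 • 1` and the Kron reduction onto the even vertices is
`(diagonal (deg W) - 2⁻¹ • W * W)` restricted to them. On a cycle, `W * W = W₂ + 2 • 1`, where
`W₂` joins vertices at distance two, and the even vertices are closed under `W₂`; hence the
reduction is `2 • 1 - 2⁻¹ • (W₂ + 2 • 1) = 2⁻¹ • lap W₂`.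
-/

section Laplacian

lemma IsBipartiteWith.apply_eq_zero {n : Type*} {W : Matrix n n ℝ} {V1 : Set n}
    (hbip : IsBipartiteWith W V1) (hW : ∀ i j, 0 ≤ W i j) {i j : n} (hij : i ∈ V1 ↔ j ∈ V1) :
    W i j = 0 :=
  (hW i j).eq_or_lt.elim Eq.symm fun hpos => absurd hij (by have := hbip i j hpos; tauto)

variable {n : Type*} [Fintype n]

lemma deg_smul (c : ℝ) (W : Matrix n n ℝ) : deg (c • W) = c • deg W := by
  ext i
  simp [deg, Finset.mul_sum]

variable [DecidableEq n]

lemma lap_smul (c : ℝ) (W : Matrix n n ℝ) : lap (c • W) = c • lap W := by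
  rw [lap, lap, deg_smul, smul_sub, diagonal_smul]

lemma lap_submatrix_val {W : Matrix n n ℝ} {s : Finset n} (h : ∀ a ∈ s, ∀ b ∉ s, W a b = 0) :
    lap (W.submatrix ((↑) : s → n) (↑)) = (lap W).submatrix (↑) (↑) := by
  have hdeg (a : s) : deg (W.submatrix ((↑) : s → n) (↑)) a = deg W a := by
    change ∑ b : s, W a b = ∑ b, W a b
    rw [Finset.sum_coe_sort s (W a)]
    exact Finset.sum_subset (Finset.subset_univ s) fun b _ hb => h a a.2 b hb
  ext a b
  simp [lap, diagonal_apply, hdeg]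

theorem kron_lap_of_isBipartiteWith {W : Matrix n n ℝ} (hW : ∀ i j, 0 ≤ W i j) {V1 : Finset n}
    (hbip : IsBipartiteWith W V1) {d : ℝ} (hd : d ≠ 0) (hdeg : ∀ k ∉ V1, deg W k = d) :
    kron (lap W) V1 = (diagonal (deg W) - d⁻¹ • (W * W)).submatrix (↑) (↑) := by
  have hzero {i j : n} (hij : i ∈ V1 ↔ j ∈ V1) : W i j = 0 :=
    hbip.apply_eq_zero hW (by rwa [Finset.mem_coe, Finset.mem_coe])
  have hL22 : (lap W).submatrix (Subtype.val : ↥(V1ᶜ) → n) (Subtype.val : ↥(V1ᶜ) → n) =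
      d • 1 := by
    ext k l
    have hk : k.1 ∉ V1 := Finset.mem_compl.1 k.2
    have hl : l.1 ∉ V1 := Finset.mem_compl.1 l.2
    rw [submatrix_apply, lap, Matrix.sub_apply, hzero (iff_of_false hk hl), sub_zero,
      Matrix.smul_apply, diagonal_apply, one_apply, hdeg k hk]
    by_cases hkl : k = l <;> simp [hkl]
  have hinv : (d • (1 : Matrix ↥(V1ᶜ) ↥(V1ᶜ) ℝ))⁻¹ = d⁻¹ • 1 :=
    inv_eq_left_inv (by simp [smul_smul, hd])
  have hcross (a b : V1) : ∑ k : ↥(V1ᶜ), lap W a k * lap W k b = (W * W) a b := by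
    rw [Finset.sum_coe_sort V1ᶜ (fun k => lap W a k * lap W k b), mul_apply]
    have hoff (k : n) (hk : k ∈ V1ᶜ) : lap W a k * lap W k b = W a k * W k b := by
      have hk : k ∉ V1 := Finset.mem_compl.1 hk
      have hak : (a : n) ≠ k := fun h => hk (h ▸ a.2)
      have hkb : k ≠ b := fun h => hk (h ▸ b.2)
      simp [lap, diagonal_apply_ne _ hak, diagonal_apply_ne _ hkb]
    rw [Finset.sum_congr rfl hoff]
    refine Finset.sum_subset (Finset.subset_univ _) fun k _ hk => ?_
    rw [hzero (iff_of_true a.2 (by simpa using hk)), zero_mul]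
  rw [kron, hL22, hinv, Matrix.mul_smul, Matrix.mul_one, Matrix.smul_mul]
  ext a b
  rw [Matrix.sub_apply, Matrix.smul_apply, mul_apply]
  simp only [submatrix_apply]
  rw [hcross]
  simp [lap, hzero (iff_of_true a.2 b.2)]

end Laplacian

section Circulant

variable {n k : ℕ}

/-- Written in the same `% n` form as the ring graph of `kron_reduction_ring_graph`, which is
therefore `circulantAdj (2 * N) 1` by definition. -/
def circulantAdj (n k : ℕ) : Matrix (Fin n) (Fin n) ℝ :=
  of fun i j => if (i.1 + k) % n = j.1 ∨ (j.1 + k) % n = i.1 then 1 else 0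

lemma of_mod_eq_smul_submatrix_circulantAdj (s : Finset (Fin n)) (w : ℝ) :
    (of fun a b : s => if (a.1.1 + k) % n = b.1.1 ∨ (b.1.1 + k) % n = a.1.1 then w else 0) =
      w • (circulantAdj n k).submatrix (↑) (↑) := by
  ext a b
  simp [circulantAdj]

lemma circulantAdj_nonneg (i j : Fin n) : 0 ≤ circulantAdj n k i j := by
  rw [circulantAdj, of_apply]
  split_ifs <;> norm_num

lemma add_mod_two_of_circulantAdj_ne_zero (h2 : 2 ∣ n) {i j : Fin n}
    (hij : circulantAdj n k i j ≠ 0) : (i.1 + k) % 2 = j.1 % 2 := by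
  rw [circulantAdj, of_apply, Ne, ite_eq_right_iff, Classical.not_imp] at hij
  rcases hij.1 with h | h
  · rw [← h, Nat.mod_mod_of_dvd _ h2]
  · have := Nat.mod_mod_of_dvd (j.1 + k) h2
    omega

variable [NeZero n]

lemma natCast_ne_zero_of_pos_of_lt {m : ℕ} (h0 : 0 < m) (h : m < n) : (m : Fin n) ≠ 0 := by
  rw [Ne, Fin.natCast_eq_zero]
  exact fun hd => absurd (Nat.le_of_dvd h0 hd) (by omega)

lemma add_mod_eq_val_iff (i j : Fin n) (k : ℕ) : (i.1 + k) % n = j.1 ↔ j = i + (k : Fin n) := by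
  rw [Fin.ext_iff, Fin.val_add, Fin.val_natCast, Nat.add_mod_mod, eq_comm]

lemma circulantAdj_apply (hk : 0 < k) (hkn : 2 * k < n) (i j : Fin n) :
    circulantAdj n k i j =
      (if j = i + (k : Fin n) then 1 else 0) + (if j = i - (k : Fin n) then 1 else 0) := by
  have hne : i + (k : Fin n) ≠ i - k := by
    have h2k : ((2 * k : ℕ) : Fin n) ≠ 0 := natCast_ne_zero_of_pos_of_lt (by omega) hkn
    push_cast at h2k
    intro h
    exact h2k (by linear_combination h)
  have hsub : i = j + (k : Fin n) ↔ j = i - k := by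
    rw [eq_sub_iff_add_eq, eq_comm]
  simp only [circulantAdj, of_apply, add_mod_eq_val_iff, hsub]
  by_cases h1 : j = i + k <;> by_cases h2 : j = i - k
  · exact absurd (h1.symm.trans h2) hne
  all_goals simp [h1, h2, hne, hne.symm]

lemma sum_circulantAdj_mul (hk : 0 < k) (hkn : 2 * k < n) (i : Fin n) (f : Fin n → ℝ) :
    ∑ j, circulantAdj n k i j * f j = f (i + k) + f (i - k) := by
  simp [circulantAdj_apply hk hkn, add_mul, Finset.sum_add_distrib]

lemma deg_circulantAdj (hk : 0 < k) (hkn : 2 * k < n) : deg (circulantAdj n k) = 2 := by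
  ext i
  simpa [deg, one_add_one_eq_two] using sum_circulantAdj_mul hk hkn i 1

lemma circulantAdj_mul_self (hk : 0 < k) (hkn : 4 * k < n) :
    circulantAdj n k * circulantAdj n k = circulantAdj n (2 * k) + (2 : ℝ) • 1 := by
  have h2k : 2 * (k : Fin n) ≠ 0 := by
    exact_mod_cast natCast_ne_zero_of_pos_of_lt (n := n) (m := 2 * k) (by omega) (by omega)
  ext i j
  rw [mul_apply, sum_circulantAdj_mul hk (by omega) i (circulantAdj n k · j)]
  simp only [circulantAdj_apply hk (show 2 * k < n by omega),
    circulantAdj_apply (show 0 < 2 * k by omega) (show 2 * (2 * k) < n by omega),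
    Matrix.add_apply, Matrix.smul_apply, one_apply, smul_eq_mul, add_sub_cancel_right,
    sub_add_cancel, Nat.cast_mul, Nat.cast_ofNat]
  rw [add_assoc i, sub_sub, ← two_mul]
  by_cases h : j = i
  · subst h
    norm_num [h2k, eq_sub_iff_add_eq]
  · simp [h, Ne.symm h]

end Circulant

/-- Kron reduction of the unit-weight ring graph on `2N` vertices (`N ≥ 3`) onto the
even-indexed vertices is the ring graph on those `N` vertices in which consecutive kept
vertices (`2i` and `2i + 2` mod `2N`) are joined by edges of weight `1/2`. -/
theorem kron_reduction_ring_graph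
    {N : ℕ} (hN : 3 ≤ N) :
    kron
        (lap (Matrix.of fun i j : Fin (2 * N) =>
          if (i.1 + 1) % (2 * N) = j.1 ∨ (j.1 + 1) % (2 * N) = i.1 then (1 : ℝ) else 0))
        (Finset.univ.filter fun i : Fin (2 * N) => i.1 % 2 = 0) =
      lap (Matrix.of
        fun a b : ↥(Finset.univ.filter fun i : Fin (2 * N) => i.1 % 2 = 0) =>
          if (a.1.1 + 2) % (2 * N) = b.1.1 ∨ (b.1.1 + 2) % (2 * N) = a.1.1 then
            (1 / 2 : ℝ) else 0) := by
  have : NeZero (2 * N) := ⟨by omega⟩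
  set V1 := Finset.univ.filter fun i : Fin (2 * N) => i.1 % 2 = 0
  have hmem (i : Fin (2 * N)) : i ∈ V1 ↔ i.1 % 2 = 0 := by simp [V1]
  have hbip : IsBipartiteWith (circulantAdj (2 * N) 1) ↑V1 := fun i j hij => by
    have := add_mod_two_of_circulantAdj_ne_zero (dvd_mul_right 2 N) hij.ne'
    simp only [Finset.mem_coe, hmem]
    omega
  have hclosed : ∀ a ∈ V1, ∀ b ∉ V1, circulantAdj (2 * N) 2 a b = 0 := fun a ha b hb => by
    by_contra hab
    have := add_mod_two_of_circulantAdj_ne_zero (dvd_mul_right 2 N) hab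
    rw [hmem] at ha hb
    omega
  change kron (lap (circulantAdj (2 * N) 1)) V1 = _
  rw [of_mod_eq_smul_submatrix_circulantAdj, lap_smul, lap_submatrix_val hclosed,
    kron_lap_of_isBipartiteWith circulantAdj_nonneg hbip two_ne_zero
      fun k _ => congrFun (deg_circulantAdj one_pos (by omega)) k,
    deg_circulantAdj one_pos (by omega), circulantAdj_mul_self one_pos (by omega), Nat.mul_one,
    lap, deg_circulantAdj two_pos (by omega)]
  ext i j
  simp only [submatrix_apply, Matrix.sub_apply, Matrix.add_apply, Matrix.smul_apply,
    diagonal_apply, one_apply, Pi.ofNat_apply, smul_eq_mul, Subtype.val_inj]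
  split_ifs <;> ring
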